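/- Fix positive integers N and D, and let B be a symmetric N × N real matrix. Let μ be the product probability measure on functions Fin N × Fin D → ℝ in which every coordinate is an independent standard real Gaussian gaussianReal 0 1, and for a sample x let X(x) denote the corresponding N × D real matrix. Then ∫ trace( (X(x)ᵀ · B · X(x))² ) dμ(x) = D · Σ_{i,j=1}^{N} [ (D+1) · B_{ij}² + B_{ii} · B_{jj} ]. -/

import Mathlib

/-!
The moment generating function of the standard Gaussian is `exp (t ^ 2 / 2)`, and each
derivative of `p t * exp (t ^ 2 / 2)` has the same shape, so the `n`-th moment is the value at `0`
of a recursively defined polynomial; this gives the moments `0, 1, 0, 3` of orders `1, …, 4`.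
By independence the expectation of a monomial in the entries of `X` factors into such moments,
which yields Isserlis' formula `E[x_p x_q x_r x_s] = δ_pq δ_rs + δ_pr δ_qs + δ_ps δ_qr`.
Expanding `trace ((Xᵀ B X) ^ 2)` into quartic monomials and summing the three pairings against
`B ⊗ B` gives the result.
-/

open MeasureTheory ProbabilityTheory Real Matrix Polynomial

noncomputable def gaussianMomentPoly : ℕ → ℝ[X]
  | 0 => 1
  | n + 1 => derivative (gaussianMomentPoly n) + X * gaussianMomentPoly n

lemma deriv_mul_exp_half_sq {p p' : ℝ → ℝ} (hp : ∀ t, HasDerivAt p (p' t) t) :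
    deriv (fun t => p t * rexp (t ^ 2 / 2)) = fun t => (p' t + t * p t) * rexp (t ^ 2 / 2) := by
  funext t
  have hexp : HasDerivAt (fun t => rexp (t ^ 2 / 2)) (rexp (t ^ 2 / 2) * t) t := by
    simpa using ((hasDerivAt_pow 2 t).div_const 2).exp
  exact ((hp t).mul hexp).deriv.trans (by ring)

lemma iteratedDeriv_exp_half_sq (n : ℕ) :
    iteratedDeriv n (fun t => rexp (t ^ 2 / 2)) =
      fun t => (gaussianMomentPoly n).eval t * rexp (t ^ 2 / 2) := by
  induction n with
  | zero => simp [gaussianMomentPoly]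
  | succ n ih =>
    rw [iteratedDeriv_succ, ih, deriv_mul_exp_half_sq fun t => Polynomial.hasDerivAt _ t]
    simp [gaussianMomentPoly]

lemma integral_pow_gaussianReal (n : ℕ) :
    ∫ x, x ^ n ∂gaussianReal 0 1 = (gaussianMomentPoly n).eval 0 := by
  have h := iteratedDeriv_mgf_zero (X := fun x => x) (μ := gaussianReal 0 1) (by simp) n
  simpa [mgf_fun_id_gaussianReal, iteratedDeriv_exp_half_sq] using h.symm

lemma integral_sq_gaussianReal : ∫ x, x ^ 2 ∂gaussianReal 0 1 = 1 := by
  simp [integral_pow_gaussianReal, gaussianMomentPoly]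

lemma integral_pow_three_gaussianReal : ∫ x, x ^ 3 ∂gaussianReal 0 1 = 0 := by
  simp [integral_pow_gaussianReal, gaussianMomentPoly]

lemma integral_pow_four_gaussianReal : ∫ x, x ^ 4 ∂gaussianReal 0 1 = 3 := by
  simp [integral_pow_gaussianReal, gaussianMomentPoly]
  norm_num

lemma integrable_pow_gaussianReal (n : ℕ) : Integrable (fun x : ℝ => x ^ n) (gaussianReal 0 1) :=
  integrable_pow_of_mem_interior_integrableExpSet (X := fun x => x) (by simp) n

lemma prod_list_map_eq_prod_pow_count {ι M : Type*} [Fintype ι] [DecidableEq ι] [CommMonoid M]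
    (l : List ι) (f : ι → M) : (l.map f).prod = ∏ i, f i ^ l.count i := by
  rw [Finset.prod_list_map_count]
  exact Finset.prod_subset (Finset.subset_univ _) fun i _ hi => by
    rw [List.count_eq_zero_of_not_mem (by simpa using hi), pow_zero]

section Isserlis

variable {ι : Type*} [Fintype ι] [DecidableEq ι]

lemma integrable_list_prod_pi_gaussianReal (l : List ι) :
    Integrable (fun x : ι → ℝ => (l.map x).prod) (Measure.pi fun _ : ι => gaussianReal 0 1) := by
  simp_rw [prod_list_map_eq_prod_pow_count]
  exact Integrable.fintype_prod fun i => integrable_pow_gaussianReal (l.count i)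

lemma integral_list_prod_pi_gaussianReal (l : List ι) :
    ∫ x, (l.map x).prod ∂(Measure.pi fun _ : ι => gaussianReal 0 1) =
      ∏ i, ∫ y, y ^ l.count i ∂gaussianReal 0 1 := by
  simp_rw [prod_list_map_eq_prod_pow_count]
  exact integral_fintype_prod_eq_prod fun i y => y ^ l.count i

lemma integrable_mul_mul_mul_pi_gaussianReal (p q r s : ι) :
    Integrable (fun x : ι → ℝ => x p * x q * x r * x s)
      (Measure.pi fun _ : ι => gaussianReal 0 1) := by
  simpa [mul_assoc] using integrable_list_prod_pi_gaussianReal [p, q, r, s]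

lemma integral_mul_mul_mul_pi_gaussianReal (p q r s : ι) :
    ∫ x, x p * x q * x r * x s ∂(Measure.pi fun _ : ι => gaussianReal 0 1) =
      (if p = q then 1 else 0) * (if r = s then 1 else 0) +
        (if p = r then 1 else 0) * (if q = s then 1 else 0) +
        (if p = s then 1 else 0) * (if q = r then 1 else 0) := by
  have h := integral_list_prod_pi_gaussianReal [p, q, r, s]
  rw [← Finset.prod_subset (Finset.subset_univ [p, q, r, s].toFinset) fun i _ hi => by
    rw [List.count_eq_zero_of_not_mem (by simpa using hi)]; simp] at h
  simp only [List.map_cons, List.map_nil, List.prod_cons, List.prod_nil, mul_one,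
    ← mul_assoc] at h
  rw [h]
  -- Orienting every equation among `p, q, r, s` the same way lets `simp_all` decide all of them.
  by_cases hpq : p = q <;> by_cases hpr : p = r <;> by_cases hps : p = s <;>
    by_cases hqr : q = r <;> by_cases hqs : q = s <;> by_cases hrs : r = s <;>
    simp_all [List.count_cons, Finset.prod_insert, integral_sq_gaussianReal,
      integral_pow_three_gaussianReal, integral_pow_four_gaussianReal,
      (by norm_num : (1 : ℝ) + 1 + 1 = 3), @eq_comm _ s p, @eq_comm _ s q, @eq_comm _ s r,
      @eq_comm _ r p, @eq_comm _ r q, @eq_comm _ q p]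

end Isserlis

lemma trace_sq_transpose_mul_mul {R m n : Type*} [CommSemiring R] [Fintype m] [Fintype n]
    [DecidableEq n] (X : Matrix m n R) (B : Matrix m m R) :
    trace ((Xᵀ * B * X) ^ 2) =
      ∑ a, ∑ b, ∑ i, ∑ j, ∑ k, ∑ l, B i j * B k l * (X i a * X j b * X k b * X l a) := by
  have entry : ∀ a b, (Xᵀ * B * X) a b = ∑ i, ∑ j, X i a * B i j * X j b := by
    intro a b
    simp only [mul_apply, transpose_apply, Finset.sum_mul]
    exact Finset.sum_comm
  simp only [trace, diag, sq, mul_apply (M := Xᵀ * B * X), entry, Finset.sum_mul_sum]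
  refine Fintype.sum_congr _ _ fun a => Fintype.sum_congr _ _ fun b =>
    Fintype.sum_congr _ _ fun i => ?_
  rw [Finset.sum_comm]
  exact Fintype.sum_congr _ _ fun j => Fintype.sum_congr _ _ fun k =>
    Fintype.sum_congr _ _ fun l => by ring

lemma sum_isserlis_pairings_eq {N D : ℕ} {B : Matrix (Fin N) (Fin N) ℝ} (hB : B.IsSymm) :
    ∑ a : Fin D, ∑ b : Fin D, ∑ i, ∑ j, ∑ k, ∑ l, B i j * B k l *
        ((if (i, a) = (j, b) then 1 else 0) * (if (k, b) = (l, a) then 1 else 0) +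
          (if (i, a) = (k, b) then 1 else 0) * (if (j, b) = (l, a) then 1 else 0) +
          (if (i, a) = (l, a) then 1 else 0) * (if (j, b) = (k, b) then 1 else 0)) =
      (D : ℝ) * ∑ i, ∑ j, (((D : ℝ) + 1) * B i j ^ 2 + B i i * B j j) := by
  -- The three pairings contribute `D Σ B i i * B k k`, `D Σ B i j ^ 2` and `D² Σ B i j * B j i`.
  simp only [Prod.mk.injEq, ite_and, mul_add, Finset.sum_add_distrib, mul_ite, mul_one, mul_zero,
    Finset.sum_ite_eq, Finset.sum_ite_eq', Finset.mem_univ, if_true, Finset.sum_ite_irrel,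
    Finset.sum_const_zero]
  simp only [hB.apply, Finset.sum_const, Finset.card_univ, Fintype.card_fin, nsmul_eq_mul, sq,
    Finset.mul_sum, ← Finset.sum_add_distrib]
  exact Fintype.sum_congr _ _ fun i => Fintype.sum_congr _ _ fun j => by ring

theorem gaussian_trace_square_moment_general
    (N D : ℕ)
    (B : Matrix (Fin N) (Fin N) ℝ) (hB : B.IsSymm) :
    (∫ x : (Fin N × Fin D) → ℝ,
        Matrix.trace (((Matrix.of fun i j => x (i, j))ᵀ * B *
            (Matrix.of fun i j => x (i, j))) ^ 2)
        ∂(Measure.pi fun _ : Fin N × Fin D => gaussianReal 0 1)) =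
      (D : ℝ) * ∑ i : Fin N, ∑ j : Fin N,
        (((D : ℝ) + 1) * (B i j) ^ 2 + B i i * B j j) := by
  have hterm := fun p q r s =>
    (integrable_mul_mul_mul_pi_gaussianReal (ι := Fin N × Fin D) p q r s).const_mul
  simp only [trace_sq_transpose_mul_mul, of_apply]
  -- Pulling the integral through the six nested sums nests six integrability side goals.
  simp (maxDischargeDepth := 7) only [integral_finsetSum, integrable_finsetSum, hterm,
    implies_true, Finset.mem_univ]
  simp only [integral_const_mul, integral_mul_mul_mul_pi_gaussianReal]
  exact sum_isserlis_pairings_eq hB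

/-- Core Gaussian moment computation: for a symmetric `N × N` matrix `B` and an `N × D`
matrix `X` of i.i.d. standard Gaussians,
`E[trace((Xᵀ B X)²)] = D Σ_{i,j} (D+1) B_{ij}² + B_{ii} B_{jj}`. -/
theorem gaussian_trace_square_moment
    (N D : ℕ) (hN : 0 < N) (hD : 0 < D)
    (B : Matrix (Fin N) (Fin N) ℝ) (hB : B.IsSymm) :
    (∫ x : (Fin N × Fin D) → ℝ,
        Matrix.trace (((Matrix.of fun i j => x (i, j))ᵀ * B *
            (Matrix.of fun i j => x (i, j))) ^ 2)
        ∂(Measure.pi fun _ : Fin N × Fin D => gaussianReal 0 1)) =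
      (D : ℝ) * ∑ i : Fin N, ∑ j : Fin N,
        (((D : ℝ) + 1) * (B i j) ^ 2 + B i i * B j j) :=
  gaussian_trace_square_moment_general N D B hB
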